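/- Let g ∈ O(Λ) and let ĝ ∈ O(L) be the isometry of L = ℤu ⊕ Λ which fixes u and equals g on Λ; ĝ induces an automorphism ĝ* of the discriminant group A_L = L^∨/L. Then g belongs to Γ = Im(ρ) (equivalently, ĝ extends to an isometry of Λ̃) if and only if ĝ* fixes the class [(u+e₁)/2] ∈ A_L. -/

import Mathlib

/-- Index type for a basis of the lattice `Λ̃ = U³ ⊕ (−E₈)² ⊕ (−2)`:
three hyperbolic planes, two copies of `−E₈`, and one rank-1 piece. -/
abbrev LamIdx : Type := (Fin 3 × Fin 2) ⊕ ((Fin 2 × Fin 8) ⊕ Fin 1)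

/-- The standard Gram matrix of the `E₈` lattice. -/
def E8mat : Matrix (Fin 8) (Fin 8) ℤ :=
  !![2, -1, 0, 0, 0, 0, 0, 0;
     -1, 2, -1, 0, 0, 0, 0, 0;
     0, -1, 2, -1, 0, 0, 0, 0;
     0, 0, -1, 2, -1, 0, 0, 0;
     0, 0, 0, -1, 2, -1, 0, -1;
     0, 0, 0, 0, -1, 2, -1, 0;
     0, 0, 0, 0, 0, -1, 2, 0;
     0, 0, 0, 0, -1, 0, 0, 2]

/-- The Gram matrix of `Λ̃ = U³ ⊕ (−E₈)² ⊕ (−2)`: block diagonal with three hyperbolic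
blocks, two `−E₈` blocks and one `(−2)` block. -/
def gram : Matrix LamIdx LamIdx ℤ := fun i j =>
  match i, j with
  | .inl (a, i), .inl (b, j) => if a = b then (if i = j then 0 else 1) else 0
  | .inr (.inl (a, i)), .inr (.inl (b, j)) => if a = b then -E8mat i j else 0
  | .inr (.inr _), .inr (.inr _) => -2
  | _, _ => 0

/-- The bilinear form `(·,·)` of the lattice `Λ̃`. -/
noncomputable def B : (LamIdx → ℤ) →ₗ[ℤ] (LamIdx → ℤ) →ₗ[ℤ] ℤ :=
  Matrix.toLinearMap₂' ℤ gram

/-- The vector `u`, of square `2`, in the first hyperbolic summand. -/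
def uu : LamIdx → ℤ := fun i =>
  if i = Sum.inl (0, 0) then 1 else if i = Sum.inl (0, 1) then 1 else 0

/-- The vector `e₁`, a generator of `u^⊥ ∩ U` in the first hyperbolic summand. -/
def ee1 : LamIdx → ℤ := fun i =>
  if i = Sum.inl (0, 0) then 1 else if i = Sum.inl (0, 1) then -1 else 0

/-- The vector `e₂`, a generator of the `(−2)` summand. -/
def ee2 : LamIdx → ℤ := fun i =>
  if i = Sum.inr (Sum.inr 0) then 1 else 0

/-- The lattice `Λ = u^⊥ ⊆ Λ̃`. -/
noncomputable def Lam : Submodule ℤ (LamIdx → ℤ) := LinearMap.ker (B.flip uu)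

/-- The orthogonal group `O(Λ)` of the lattice `Λ = u^⊥`. -/
noncomputable def OL : Subgroup ((↥Lam) ≃ₗ[ℤ] (↥Lam)) where
  carrier := {g | ∀ x y : Lam, B (g x : LamIdx → ℤ) (g y : LamIdx → ℤ) = B (x : LamIdx → ℤ) (y : LamIdx → ℤ)}
  mul_mem' := by
    intro a b ha hb x y
    have : ∀ z : Lam, (a * b) z = a (b z) := fun z => rfl
    rw [this, this]
    rw [ha (b x) (b y), hb x y]
  one_mem' := by intro x y; rfl
  inv_mem' := by
    intro g hg x y
    have h := hg (g⁻¹ x) (g⁻¹ y)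
    have e : ∀ z : Lam, g (g⁻¹ z) = z := fun z => g.apply_symm_apply z
    rw [e, e] at h
    exact h.symm

/-- The subgroup `Γ = Im(ρ) ≤ O(Λ)`: restrictions to `Λ = u^⊥` of isometries of `Λ̃`
fixing `u`. -/
noncomputable def Gamma : Subgroup ((↥Lam) ≃ₗ[ℤ] (↥Lam)) where
  carrier := {h | ∃ g : (LamIdx → ℤ) ≃ₗ[ℤ] (LamIdx → ℤ),
    (∀ x y : LamIdx → ℤ, B (g x) (g y) = B x y) ∧ g uu = uu ∧
    ∀ x : Lam, (h x : LamIdx → ℤ) = g (x : LamIdx → ℤ)}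
  mul_mem' := by
    rintro a b ⟨ga, hga, hgau, hgaa⟩ ⟨gb, hgb, hgbu, hgbb⟩
    refine ⟨ga * gb, fun x y => ?_, ?_, fun x => ?_⟩
    · have : ∀ z, (ga * gb) z = ga (gb z) := fun z => rfl
      rw [this, this, hga, hgb]
    · have : (ga * gb) uu = ga (gb uu) := rfl
      rw [this, hgbu, hgau]
    · have h1 : (a * b) x = a (b x) := rfl
      have h2 : (ga * gb) (x : LamIdx → ℤ) = ga (gb (x : LamIdx → ℤ)) := rfl
      rw [h1, h2, hgaa, hgbb]
  one_mem' := ⟨1, fun x y => rfl, rfl, fun x => rfl⟩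
  inv_mem' := by
    rintro h ⟨g, hg, hgu, hgh⟩
    refine ⟨g⁻¹, fun x y => ?_, ?_, fun x => ?_⟩
    · have e : ∀ z, g (g⁻¹ z) = z := fun z => g.apply_symm_apply z
      have := hg (g⁻¹ x) (g⁻¹ y)
      rw [e, e] at this
      exact this.symm
    · have : g⁻¹ (g uu) = uu := g.symm_apply_apply uu
      rw [hgu] at this
      exact this
    · apply g.injective
      have e : ∀ z, g (g⁻¹ z) = z := fun z => g.apply_symm_apply z
      rw [e]
      rw [← hgh (h⁻¹ x)]
      have : h (h⁻¹ x) = x := h.apply_symm_apply x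
      rw [this]

/-- The sublattice `L = ℤu + u^⊥ = ℤu ⊕ Λ` of `Λ̃`. -/
noncomputable def LL : Submodule ℤ (LamIdx → ℤ) := Submodule.span ℤ {uu} ⊔ Lam

/-- The inclusion of `Λ̃` into `Λ̃ ⊗ ℚ`. -/
def toQlin : (LamIdx → ℤ) →ₗ[ℤ] (LamIdx → ℚ) where
  toFun x := fun i => (x i : ℚ)
  map_add' x y := by funext i; push_cast; simp
  map_smul' c x := by funext i; push_cast; simp

/-- The Gram matrix of `Λ̃`, over `ℚ`. -/
def gramQ : Matrix LamIdx LamIdx ℚ := fun i j => (gram i j : ℚ)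

/-- The `ℚ`-bilinear extension of the form of `Λ̃` to `Λ̃ ⊗ ℚ`. -/
noncomputable def Bq : (LamIdx → ℚ) →ₗ[ℚ] (LamIdx → ℚ) →ₗ[ℚ] ℚ :=
  Matrix.toLinearMap₂' ℚ gramQ

/-- The image of `L` in `Λ̃ ⊗ ℚ`. -/
noncomputable def Lmap : Submodule ℤ (LamIdx → ℚ) := Submodule.map toQlin LL

/-- The dual lattice `L^∨ = {x ∈ L ⊗ ℚ : (x,y) ∈ ℤ for all y ∈ L}`. -/
noncomputable def Ldual : Submodule ℤ (LamIdx → ℚ) where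
  carrier := {x | ∀ y ∈ LL, ∃ n : ℤ, Bq x (toQlin y) = n}
  add_mem' := by
    rintro a b ha hb y hy
    obtain ⟨n, hn⟩ := ha y hy
    obtain ⟨m, hm⟩ := hb y hy
    exact ⟨n + m, by rw [map_add, LinearMap.add_apply, hn, hm]; push_cast; ring⟩
  zero_mem' := fun y hy => ⟨0, by simp⟩
  smul_mem' := by
    intro c x hx y hy
    obtain ⟨n, hn⟩ := hx y hy
    refine ⟨c * n, ?_⟩
    have h1 : Bq (c • x) = c • Bq x := map_zsmul Bq c x
    rw [h1, LinearMap.smul_apply, hn]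
    push_cast
    simp


/-! Write `e := (u + e₁)/2`; it lies in `Λ̃` and `(e, u) = 1`, so `Λ̃ = ℤe ⊕ Λ`, `2Λ̃ ⊆ L`, and the
condition on the class of `e` says `ĝ e - e ∈ L`. If `g̃ ∈ O(Λ̃)` fixes `u` and extends `g`, it agrees
with `ĝ` on `L`, hence on `Λ̃`, and `g̃ e - e ⊥ u`, so `ĝ e - e ∈ Λ`. Conversely, if `ĝ e ≡ e` modulo
`L`, then `ĝ` maps `ℤe + Λ = Λ̃` into itself; so does `ĝ⁻¹`, which fixes the class of `e` as well
since it preserves `L`. The resulting automorphism of `Λ̃` is an isometry, because it preserves the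
form on pairs of vectors from `{u} ∪ Λ`, and these span `L ⊇ 2Λ̃`. -/

theorem LinearMap.ext_of_zsmul_mem {M V : Type*} [AddCommGroup M] [AddCommGroup V]
    [IsAddTorsionFree V] {p : Submodule ℤ M} {n : ℤ} (hn : n ≠ 0) (hp : ∀ x : M, n • x ∈ p)
    {f g : M →ₗ[ℤ] V} (h : p ≤ LinearMap.eqLocus f g) : f = g :=
  LinearMap.ext fun x => zsmul_right_injective hn <| by simpa using h (hp x)

theorem LinearEquiv.exists_comp_eq_of_apply_mem_range {R M N : Type*} [Semiring R]
    [AddCommMonoid M] [AddCommMonoid N] [Module R M] [Module R N]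
    {i : M →ₗ[R] N} (hi : Function.Injective i) (e : N ≃ₗ[R] N)
    (he : ∀ x, e (i x) ∈ LinearMap.range i) (he' : ∀ x, e.symm (i x) ∈ LinearMap.range i) :
    ∃ F : M ≃ₗ[R] M, ∀ x, i (F x) = e (i x) := by
  have hrange : (LinearMap.range i).map (e : N →ₗ[R] N) = LinearMap.range i := by
    refine le_antisymm (Submodule.map_le_iff_le_comap.2 ?_) ?_
    · rintro _ ⟨x, rfl⟩
      exact he x
    · rintro _ ⟨x, rfl⟩
      exact ⟨e.symm (i x), he' x, e.apply_symm_apply _⟩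
  let E := LinearEquiv.ofInjective i hi
  exact ⟨E.trans ((e.ofSubmodules _ _ hrange).trans E.symm), fun x => by simp [E]⟩

theorem gram_isSymm : gram.IsSymm := by decide

theorem B_comm (x y : LamIdx → ℤ) : B x y = B y x := by
  rw [B, Matrix.toLinearMap₂'_apply', Matrix.toLinearMap₂'_apply', Matrix.dotProduct_mulVec,
    ← Matrix.mulVec_transpose, gram_isSymm.eq, dotProduct_comm]

theorem B_apply_uu (x : LamIdx → ℤ) : B x uu = x (.inl (0, 0)) + x (.inl (0, 1)) := by
  simp [B, Matrix.toLinearMap₂'_apply, Fintype.sum_sum_type, Fintype.sum_prod_type,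
    Fin.sum_univ_succ, uu, gram]

theorem mem_Lam_iff {x : LamIdx → ℤ} : x ∈ Lam ↔ B x uu = 0 := Iff.rfl

theorem B_uu_eq_zero_of_mem_Lam {z : LamIdx → ℤ} (hz : z ∈ Lam) : B uu z = 0 := by
  rw [B_comm]
  exact hz

theorem ee1_mem_Lam : ee1 ∈ Lam := by rw [mem_Lam_iff, B_apply_uu]; rfl

/-- The integral vector `(u + e₁) / 2`. -/
def ee : LamIdx → ℤ := Pi.single (.inl (0, 0)) 1

theorem two_smul_ee : (2 : ℤ) • ee = uu + ee1 := by decide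

theorem B_ee_uu : B ee uu = 1 := by rw [B_apply_uu]; rfl

theorem sub_smul_ee_mem_Lam (x : LamIdx → ℤ) : x - B x uu • ee ∈ Lam := by
  rw [mem_Lam_iff, map_sub, map_zsmul, LinearMap.sub_apply, LinearMap.smul_apply, B_ee_uu,
    smul_eq_mul, mul_one, sub_self]

theorem smul_uu_add_mem_LL (c : ℤ) {z : LamIdx → ℤ} (hz : z ∈ Lam) : c • uu + z ∈ LL :=
  add_mem (Submodule.mem_sup_left (Submodule.smul_mem _ c (Submodule.mem_span_singleton_self uu)))
    (Submodule.mem_sup_right hz)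

theorem two_smul_mem_LL (x : LamIdx → ℤ) : (2 : ℤ) • x ∈ LL := by
  have hx : (2 : ℤ) • x = B x uu • uu + ((2 : ℤ) • (x - B x uu • ee) + B x uu • ee1) := by
    rw [smul_sub, smul_comm (2 : ℤ) (B x uu) ee, two_smul_ee, smul_add]
    abel
  rw [hx]
  exact smul_uu_add_mem_LL _ <|
    add_mem (Submodule.smul_mem _ _ (sub_smul_ee_mem_Lam x)) (Submodule.smul_mem _ _ ee1_mem_Lam)

theorem toQlin_injective : Function.Injective toQlin := fun x y h =>
  funext fun i => by simpa [toQlin] using congrFun h i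

theorem inv_two_smul_uu_add_ee1 : (2⁻¹ : ℚ) • (toQlin uu + toQlin ee1) = toQlin ee := by
  rw [← map_add, ← two_smul_ee, map_zsmul, ← Int.cast_smul_eq_zsmul ℚ, smul_smul]
  norm_num

theorem ext_of_apply_uu_of_eqOn_Lam {V : Type*} [AddCommGroup V] [IsAddTorsionFree V]
    {f g : (LamIdx → ℤ) →ₗ[ℤ] V} (hu : f uu = g uu) (hΛ : ∀ x ∈ Lam, f x = g x) : f = g :=
  LinearMap.ext_of_zsmul_mem two_ne_zero two_smul_mem_LL <|
    sup_le ((Submodule.span_singleton_le_iff_mem _ _).2 hu) hΛ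

theorem ext₂_of_eqOn_uu_Lam {β₁ β₂ : (LamIdx → ℤ) →ₗ[ℤ] (LamIdx → ℤ) →ₗ[ℤ] ℤ}
    (h : ∀ a, (a = uu ∨ a ∈ Lam) → ∀ b, (b = uu ∨ b ∈ Lam) → β₁ a b = β₂ a b) : β₁ = β₂ := by
  have hleft : ∀ a, (a = uu ∨ a ∈ Lam) → β₁ a = β₂ a := fun a ha =>
    ext_of_apply_uu_of_eqOn_Lam (h a ha uu (.inl rfl)) fun b hb => h a ha b (.inr hb)
  refine LinearMap.ext₂ fun x y => LinearMap.congr_fun (ext_of_apply_uu_of_eqOn_Lam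
    (f := β₁.flip y) (g := β₂.flip y) ?_ fun a ha => ?_) x
  · simp [hleft uu (.inl rfl)]
  · simp [hleft a (.inr ha)]

theorem isometry_of_apply_uu_of_eqOn_Lam {g : Lam ≃ₗ[ℤ] Lam} (hg : g ∈ OL)
    {gt : (LamIdx → ℤ) →ₗ[ℤ] (LamIdx → ℤ)} (hu : gt uu = uu)
    (hΛ : ∀ x : Lam, (g x : LamIdx → ℤ) = gt x) (x y : LamIdx → ℤ) : B (gt x) (gt y) = B x y := by
  suffices B.compl₁₂ gt gt = B from LinearMap.congr_fun₂ this x y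
  refine ext₂_of_eqOn_uu_Lam fun a ha b hb => ?_
  rcases ha with rfl | ha <;> rcases hb with rfl | hb
  · simp [hu]
  · simp [hu, ← hΛ ⟨b, hb⟩, B_uu_eq_zero_of_mem_Lam hb, B_uu_eq_zero_of_mem_Lam (g ⟨b, hb⟩).2]
  · simp [hu, ← hΛ ⟨a, ha⟩, mem_Lam_iff.1 ha, mem_Lam_iff.1 (g ⟨a, ha⟩).2]
  · simpa [← hΛ ⟨a, ha⟩, ← hΛ ⟨b, hb⟩] using hg ⟨a, ha⟩ ⟨b, hb⟩

/-- `gq` is the `ℚ`-linear extension of the isometry `ĝ` of `L = ℤu ⊕ Λ` that fixes `u` and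
equals `g` on `Λ`. -/
structure IsHatExtension (g : Lam ≃ₗ[ℤ] Lam) (gq : (LamIdx → ℚ) ≃ₗ[ℚ] (LamIdx → ℚ)) : Prop where
  map_uu : gq (toQlin uu) = toQlin uu
  map_Lam : ∀ x : Lam, gq (toQlin (x : LamIdx → ℤ)) = toQlin ((g x : Lam) : LamIdx → ℤ)

namespace IsHatExtension

variable {g : Lam ≃ₗ[ℤ] Lam} {gq : (LamIdx → ℚ) ≃ₗ[ℚ] (LamIdx → ℚ)}

theorem symm (h : IsHatExtension g gq) : IsHatExtension g.symm gq.symm where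
  map_uu := gq.symm_apply_eq.2 h.map_uu.symm
  map_Lam x := gq.symm_apply_eq.2 (by rw [h.map_Lam, g.apply_symm_apply])

theorem apply_mem_Lmap (h : IsHatExtension g gq) {v : LamIdx → ℚ} (hv : v ∈ Lmap) :
    gq v ∈ Lmap := by
  obtain ⟨w, hw, rfl⟩ := hv
  obtain ⟨p, hp, z, hz, rfl⟩ := Submodule.mem_sup.1 hw
  obtain ⟨c, rfl⟩ := Submodule.mem_span_singleton.1 hp
  have hgw : gq (toQlin (c • uu + z)) = toQlin (c • uu + g ⟨z, hz⟩) := by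
    simp only [map_add, map_zsmul, h.map_uu, h.map_Lam ⟨z, hz⟩]
  rw [hgw]
  exact Submodule.mem_map_of_mem (smul_uu_add_mem_LL c (g ⟨z, hz⟩).2)

theorem symm_apply_sub_mem_Lmap (h : IsHatExtension g gq)
    (hd : gq (toQlin ee) - toQlin ee ∈ Lmap) : gq.symm (toQlin ee) - toQlin ee ∈ Lmap := by
  have hsymm : gq.symm (toQlin ee) - toQlin ee = -gq.symm (gq (toQlin ee) - toQlin ee) := by
    rw [map_sub, gq.symm_apply_apply, neg_sub]
  rw [hsymm]
  exact neg_mem (h.symm.apply_mem_Lmap hd)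

theorem apply_mem_range (h : IsHatExtension g gq) (hd : gq (toQlin ee) - toQlin ee ∈ Lmap)
    (x : LamIdx → ℤ) : gq (toQlin x) ∈ LinearMap.range toQlin := by
  have hx : x = B x uu • ee + (x - B x uu • ee) := by abel
  have hge : gq (toQlin ee) = toQlin ee + (gq (toQlin ee) - toQlin ee) := by abel
  rw [hx, map_add, map_add, map_zsmul, map_zsmul, h.map_Lam ⟨_, sub_smul_ee_mem_Lam x⟩, hge]
  exact add_mem (Submodule.smul_mem _ _ (add_mem ⟨ee, rfl⟩ (LinearMap.map_le_range hd))) ⟨_, rfl⟩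

theorem apply_toQlin_eq (h : IsHatExtension g gq) {gt : (LamIdx → ℤ) →ₗ[ℤ] (LamIdx → ℤ)}
    (hu : gt uu = uu) (hΛ : ∀ x : Lam, (g x : LamIdx → ℤ) = gt x) (x : LamIdx → ℤ) :
    gq (toQlin x) = toQlin (gt x) :=
  LinearMap.congr_fun (ext_of_apply_uu_of_eqOn_Lam
    (f := (gq.toLinearMap.restrictScalars ℤ) ∘ₗ toQlin) (g := toQlin ∘ₗ gt)
    (by simp [h.map_uu, hu]) fun z hz => by simp [h.map_Lam ⟨z, hz⟩, hΛ ⟨z, hz⟩]) x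

end IsHatExtension

/-- for `g ∈ O(Λ)`, let `ĝ` be the isometry of `L = ℤu ⊕ Λ` fixing `u` and
equal to `g` on `Λ` (here represented by its `ℚ`-linear extension `gq` to `L ⊗ ℚ`).
Then `g ∈ Γ` (equivalently, `ĝ` extends to an isometry of `Λ̃`) if and only if the
induced automorphism of the discriminant group `A_L = L^∨/L` fixes the class
`[(u+e₁)/2]`. -/
theorem mem_Gamma_iff_fixes_class (g : (↥Lam) ≃ₗ[ℤ] (↥Lam)) (hg : g ∈ OL)
    (gq : (LamIdx → ℚ) ≃ₗ[ℚ] (LamIdx → ℚ))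
    (hgu : gq (toQlin uu) = toQlin uu)
    (hgext : ∀ x : Lam, gq (toQlin (x : LamIdx → ℤ)) = toQlin ((g x : Lam) : LamIdx → ℤ)) :
    g ∈ Gamma ↔
      gq ((2⁻¹ : ℚ) • (toQlin uu + toQlin ee1)) -
        (2⁻¹ : ℚ) • (toQlin uu + toQlin ee1) ∈ Lmap := by
  have hext : IsHatExtension g gq := ⟨hgu, hgext⟩
  rw [inv_two_smul_uu_add_ee1]
  constructor
  · rintro ⟨gt, hgt, hgtu, hgtΛ⟩
    have hfix : gt ee - ee ∈ Lam := by
      rw [mem_Lam_iff, map_sub, LinearMap.sub_apply, ← hgt ee uu, hgtu, sub_self]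
    rw [hext.apply_toQlin_eq (gt := gt.toLinearMap) hgtu hgtΛ, ← map_sub]
    exact Submodule.mem_map_of_mem (Submodule.mem_sup_right hfix)
  · intro hd
    obtain ⟨gt, hgt⟩ := LinearEquiv.exists_comp_eq_of_apply_mem_range toQlin_injective
      (gq.restrictScalars ℤ) (hext.apply_mem_range hd)
      (hext.symm.apply_mem_range (hext.symm_apply_sub_mem_Lmap hd))
    have hu : gt uu = uu := toQlin_injective (by rw [hgt]; exact hgu)
    have hΛ : ∀ x : Lam, (g x : LamIdx → ℤ) = gt x :=
      fun x => toQlin_injective (by rw [hgt, ← hgext]; rfl)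
    exact ⟨gt, isometry_of_apply_uu_of_eqOn_Lam hg (gt := gt.toLinearMap) hu hΛ, hu, hΛ⟩
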